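/- Let B be an m×n nonnegative matrix of the form B = diag(1/√q)·W·diag(√p) where W is column-stochastic, p is a strictly positive probability vector, and q = Wp is strictly positive. Then for all L ∈ ℝ^n, ‖BL‖ ≤ ‖L‖ (the operator norm of B is exactly 1). -/

import Mathlib

/-!
Row by row, `(B L) y = (∑ₓ W y x √(p x) L x) / √(q y)`, and the weighted Cauchy–Schwarz
inequality with weights `W y ·` bounds its square by `(∑ₓ W y x p x) (∑ₓ W y x (L x)²) / q y
= ∑ₓ W y x (L x)²`. Summing over `y` and using that the columns of `W` sum to `1` gives
`‖B L‖² ≤ ‖L‖²`. Equality holds at the unit vector `√p`, which `B` maps to the unit vector `√q`.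
-/

open Finset Matrix

namespace Matrix

variable {X Y : Type*} [Fintype X]

/-- The divergence transition matrix `diag(1/√q) W diag(√p)` with `q = W p`. -/
noncomputable def divergenceTransitionMatrix (W : Matrix Y X ℝ) (p : X → ℝ) : Matrix Y X ℝ :=
  fun y x => W y x * √(p x) / √((W *ᵥ p) y)

lemma divergenceTransitionMatrix_mulVec_apply (W : Matrix Y X ℝ) (p L : X → ℝ) (y : Y) :
    (divergenceTransitionMatrix W p *ᵥ L) y = (∑ x, W y x * √(p x) * L x) / √((W *ᵥ p) y) := by
  simp only [divergenceTransitionMatrix, mulVec, dotProduct, sum_div]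
  exact sum_congr rfl fun x _ => by ring

variable {W : Matrix Y X ℝ} {p : X → ℝ}

lemma mulVec_apply_nonneg (hW0 : ∀ y x, 0 ≤ W y x) {v : X → ℝ} (hv : ∀ x, 0 ≤ v x) (y : Y) :
    0 ≤ (W *ᵥ v) y :=
  sum_nonneg fun x _ => mul_nonneg (hW0 y x) (hv x)

lemma sq_divergenceTransitionMatrix_mulVec_apply_le (hW0 : ∀ y x, 0 ≤ W y x)
    (hp : ∀ x, 0 ≤ p x) (L : X → ℝ) (y : Y) :
    (divergenceTransitionMatrix W p *ᵥ L) y ^ 2 ≤ (W *ᵥ fun x => L x ^ 2) y := by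
  have hq := mulVec_apply_nonneg hW0 hp y
  rw [divergenceTransitionMatrix_mulVec_apply, div_pow, Real.sq_sqrt hq]
  refine div_le_of_le_mul₀ hq (mulVec_apply_nonneg hW0 (fun x => sq_nonneg (L x)) y) ?_
  rw [mul_comm]
  refine sum_sq_le_sum_mul_sum_of_sq_le_mul _ (fun x _ => mul_nonneg (hW0 y x) (hp x))
    (fun x _ => mul_nonneg (hW0 y x) (sq_nonneg _)) fun x _ => le_of_eq ?_
  rw [mul_pow, mul_pow, Real.sq_sqrt (hp x)]
  ring

lemma divergenceTransitionMatrix_mulVec_sqrt (hp : ∀ x, 0 ≤ p x) :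
    divergenceTransitionMatrix W p *ᵥ (fun x => √(p x)) = fun y => √((W *ᵥ p) y) := by
  ext y
  rw [divergenceTransitionMatrix_mulVec_apply]
  simp only [mul_assoc, Real.mul_self_sqrt (hp _)]
  exact Real.div_sqrt

variable [Fintype Y]

lemma sum_mulVec_eq_sum_of_sum_col_eq_one (hW1 : ∀ x, ∑ y, W y x = 1) (v : X → ℝ) :
    ∑ y, (W *ᵥ v) y = ∑ x, v x := by
  simp only [mulVec, dotProduct]
  rw [sum_comm]
  simp only [← sum_mul, hW1, one_mul]

lemma sum_sq_divergenceTransitionMatrix_mulVec_le (hW0 : ∀ y x, 0 ≤ W y x)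
    (hW1 : ∀ x, ∑ y, W y x = 1) (hp : ∀ x, 0 ≤ p x) (L : X → ℝ) :
    ∑ y, (divergenceTransitionMatrix W p *ᵥ L) y ^ 2 ≤ ∑ x, L x ^ 2 :=
  calc ∑ y, (divergenceTransitionMatrix W p *ᵥ L) y ^ 2
      ≤ ∑ y, (W *ᵥ fun x => L x ^ 2) y :=
        sum_le_sum fun y _ => sq_divergenceTransitionMatrix_mulVec_apply_le hW0 hp L y
    _ = ∑ x, L x ^ 2 := sum_mulVec_eq_sum_of_sum_col_eq_one hW1 _

end Matrix

theorem stmt_17_general {X Y : Type*} [Fintype X] [Fintype Y]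
    (W : Matrix Y X ℝ) (p : X → ℝ) (q : Y → ℝ)
    (hW0 : ∀ y x, 0 ≤ W y x) (hW1 : ∀ x, ∑ y, W y x = 1)
    (hp : ∀ x, 0 < p x) (hpsum : ∑ x, p x = 1)
    (hq : q = W.mulVec p)
    (B : Matrix Y X ℝ)
    (hB : B = fun y x => W y x * Real.sqrt (p x) / Real.sqrt (q y)) :
    (∀ L : X → ℝ, ∑ y, (B.mulVec L y) ^ 2 ≤ ∑ x, (L x) ^ 2) ∧
    (∃ L : X → ℝ, (∑ x, (L x) ^ 2 = 1) ∧ ∑ y, (B.mulVec L y) ^ 2 = 1) := by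
  have hp0 : ∀ x, 0 ≤ p x := fun x => (hp x).le
  have hB' : B = divergenceTransitionMatrix W p := by rw [hB, hq]; rfl
  subst hB'
  refine ⟨sum_sq_divergenceTransitionMatrix_mulVec_le hW0 hW1 hp0, fun x => √(p x), ?_, ?_⟩
  · simp only [Real.sq_sqrt (hp0 _), hpsum]
  · simp only [divergenceTransitionMatrix_mulVec_sqrt hp0, 
      Real.sq_sqrt (mulVec_apply_nonneg hW0 hp0 _), sum_mulVec_eq_sum_of_sum_col_eq_one hW1, hpsum]

/-- A divergence transition matrix `B = diag(1/√q) W diag(√p)` with `W` column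
stochastic, `p > 0` a probability vector, `q = W p > 0`, is a contraction:
`‖B L‖ ≤ ‖L‖` for all `L` (and the operator norm is exactly `1`). -/
theorem stmt_17 {X Y : Type*} [Fintype X] [Fintype Y]
    (W : Matrix Y X ℝ) (p : X → ℝ) (q : Y → ℝ)
    (hW0 : ∀ y x, 0 ≤ W y x) (hW1 : ∀ x, ∑ y, W y x = 1)
    (hp : ∀ x, 0 < p x) (hpsum : ∑ x, p x = 1)
    (hq : q = W.mulVec p) (hqpos : ∀ y, 0 < q y)
    (B : Matrix Y X ℝ)
    (hB : B = fun y x => W y x * Real.sqrt (p x) / Real.sqrt (q y)) :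
    (∀ L : X → ℝ, ∑ y, (B.mulVec L y) ^ 2 ≤ ∑ x, (L x) ^ 2) ∧
    (∃ L : X → ℝ, (∑ x, (L x) ^ 2 = 1) ∧ ∑ y, (B.mulVec L y) ^ 2 = 1) :=
  stmt_17_general W p q hW0 hW1 hp hpsum hq B hB
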